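/- arXiv:2010.06712 — 2 statements merged into one kernel-verified Lean document; each statement's English description precedes it below -/
import Mathlib

section
/- For positive integers N, n with N > e·n and for any number of lists Φ < 2^{n/2}, if L_1, …, L_Φ are chosen independently and uniformly at random from [N]^n, then the probability that there exists a set S ⊆ [N] of size N/16 that n/2-covers more than (3/n)·N of the lists is at most 2^{-N/4}. Here a set S 'n/2-covers' a list L ∈ [N]^n if at least n/2 entries of L lie in S. -/
open Finset

lemma card_forall_mem {m : ℕ} {α : Type*} [Fintype α] [DecidableEq α]
    (T : Finset (Fin m)) (A : Finset α) :
    (univ.filter fun f : Fin m → α => ∀ φ ∈ T, f φ ∈ A).card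
      = A.card ^ T.card * (Fintype.card α) ^ (m - T.card) := by
  have h1 : (univ.filter fun f : Fin m → α => ∀ φ ∈ T, f φ ∈ A)
      = Fintype.piFinset (fun φ => if φ ∈ T then A else univ) := by
    ext f
    simp only [mem_filter, mem_univ, true_and, Fintype.mem_piFinset]
    constructor
    · intro h φ
      by_cases hφ : φ ∈ T <;> simp [hφ, h φ]
    · intro h φ hφ
      have := h φ; simpa [hφ] using this
  rw [h1, Fintype.card_piFinset]
  simp only [apply_ite Finset.card]
  rw [Finset.prod_ite (f := fun _ => A.card) (g := fun _ => univ.card)]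
  simp only [prod_const]
  congr 1
  · congr 1; simp [Finset.filter_mem_eq_inter]
  · rw [Finset.card_univ]
    congr 1
    have : univ.filter (fun a => a ∉ T) = Tᶜ := by ext; simp
    rw [this, card_compl]
    simp

lemma covered_card_le (N n : ℕ) (S : Finset (Fin N)) :
    (univ.filter fun L : Fin n → Fin N =>
        n ≤ 2 * (univ.filter fun j => L j ∈ S).card).card
      ≤ n.choose ((n+1)/2) * (S.card ^ ((n+1)/2) * N ^ (n - (n+1)/2)) := by
  set h := (n+1)/2 with hh
  calc (univ.filter fun L : Fin n → Fin N =>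
        n ≤ 2 * (univ.filter fun j => L j ∈ S).card).card
      ≤ ((powersetCard h (univ : Finset (Fin n))).biUnion
          (fun J => univ.filter fun L : Fin n → Fin N => ∀ j ∈ J, L j ∈ S)).card := by
        apply card_le_card
        intro L hL
        rw [mem_filter] at hL
        obtain ⟨J, hJsub, hJcard⟩ := Finset.exists_subset_card_eq
          (show h ≤ (univ.filter fun j => L j ∈ S).card by omega)
        rw [mem_biUnion]
        refine ⟨J, by simp [mem_powersetCard_univ, hJcard], ?_⟩
        rw [mem_filter]
        exact ⟨mem_univ _, fun j hj => by simpa using (mem_filter.mp (hJsub hj)).2⟩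
    _ ≤ ∑ J ∈ powersetCard h (univ : Finset (Fin n)),
          (univ.filter fun L : Fin n → Fin N => ∀ j ∈ J, L j ∈ S).card :=
        card_biUnion_le
    _ ≤ ∑ J ∈ powersetCard h (univ : Finset (Fin n)),
          S.card ^ h * N ^ (n - h) := by
        apply Finset.sum_le_sum
        intro J hJ
        rw [mem_powersetCard_univ] at hJ
        rw [card_forall_mem, hJ, Fintype.card_fin]
    _ = n.choose h * (S.card ^ h * N ^ (n - h)) := by
        rw [Finset.sum_const, Finset.card_powersetCard, card_univ, Fintype.card_fin,
          smul_eq_mul]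

lemma badCard_le (N n Φ t : ℕ) :
    (univ.filter fun Ls : Fin Φ → Fin n → Fin N =>
        ∃ S : Finset (Fin N), S.card = N / 16 ∧
          t ≤ (univ.filter fun φ =>
                n ≤ 2 * (univ.filter fun j => Ls φ j ∈ S).card).card).card
      ≤ 2 ^ N * (Φ.choose t *
          ((n.choose ((n+1)/2) * ((N/16) ^ ((n+1)/2) * N ^ (n - (n+1)/2))) ^ t
            * (N ^ n) ^ (Φ - t))) := by
  set c := n.choose ((n+1)/2) * ((N/16) ^ ((n+1)/2) * N ^ (n - (n+1)/2)) with hc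
  calc (univ.filter fun Ls : Fin Φ → Fin n → Fin N =>
        ∃ S : Finset (Fin N), S.card = N / 16 ∧
          t ≤ (univ.filter fun φ =>
                n ≤ 2 * (univ.filter fun j => Ls φ j ∈ S).card).card).card
      ≤ ((powersetCard (N/16) (univ : Finset (Fin N))).biUnion fun S =>
          (powersetCard t (univ : Finset (Fin Φ))).biUnion fun T =>
            univ.filter fun Ls : Fin Φ → Fin n → Fin N =>
              ∀ φ ∈ T, (Ls φ) ∈ (univ.filter fun L : Fin n → Fin N =>
                n ≤ 2 * (univ.filter fun j => L j ∈ S).card)).card := by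
        apply card_le_card
        intro Ls hLs
        rw [mem_filter] at hLs
        obtain ⟨_, S, hScard, hScov⟩ := hLs
        rw [mem_biUnion]
        refine ⟨S, by simp [mem_powersetCard_univ, hScard], ?_⟩
        obtain ⟨T, hTsub, hTcard⟩ := Finset.exists_subset_card_eq hScov
        rw [mem_biUnion]
        refine ⟨T, by simp [mem_powersetCard_univ, hTcard], ?_⟩
        rw [mem_filter]
        refine ⟨mem_univ _, fun φ hφ => ?_⟩
        have := (mem_filter.mp (hTsub hφ)).2
        simp only [mem_filter, mem_univ, true_and]
        exact this
    _ ≤ ∑ S ∈ powersetCard (N/16) (univ : Finset (Fin N)),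
          ((powersetCard t (univ : Finset (Fin Φ))).biUnion fun T =>
            univ.filter fun Ls : Fin Φ → Fin n → Fin N =>
              ∀ φ ∈ T, (Ls φ) ∈ (univ.filter fun L : Fin n → Fin N =>
                n ≤ 2 * (univ.filter fun j => L j ∈ S).card)).card :=
        card_biUnion_le
    _ ≤ ∑ S ∈ powersetCard (N/16) (univ : Finset (Fin N)),
        ∑ T ∈ powersetCard t (univ : Finset (Fin Φ)),
          (univ.filter fun Ls : Fin Φ → Fin n → Fin N =>
              ∀ φ ∈ T, (Ls φ) ∈ (univ.filter fun L : Fin n → Fin N =>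
                n ≤ 2 * (univ.filter fun j => L j ∈ S).card)).card :=
        Finset.sum_le_sum fun _ _ => card_biUnion_le
    _ ≤ ∑ S ∈ powersetCard (N/16) (univ : Finset (Fin N)),
        ∑ T ∈ powersetCard t (univ : Finset (Fin Φ)),
          c ^ t * (N ^ n) ^ (Φ - t) := by
        apply Finset.sum_le_sum
        intro S hS
        apply Finset.sum_le_sum
        intro T hT
        rw [mem_powersetCard_univ] at hS hT
        rw [card_forall_mem, hT]
        have hcard : Fintype.card (Fin n → Fin N) = N ^ n := by
          simp [Fintype.card_fun]
        rw [hcard]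
        apply Nat.mul_le_mul_right
        apply Nat.pow_le_pow_left
        calc (univ.filter fun L : Fin n → Fin N =>
              n ≤ 2 * (univ.filter fun j => L j ∈ S).card).card
            ≤ n.choose ((n+1)/2) * (S.card ^ ((n+1)/2) * N ^ (n - (n+1)/2)) :=
              covered_card_le N n S
          _ = c := by rw [hS, hc]
    _ ≤ 2 ^ N * (Φ.choose t * (c ^ t * (N ^ n) ^ (Φ - t))) := by
        rw [Finset.sum_const, Finset.sum_const, Finset.card_powersetCard,
          Finset.card_powersetCard, card_univ, card_univ, Fintype.card_fin,
          Fintype.card_fin, smul_eq_mul, smul_eq_mul]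
        have hle : N.choose (N/16) ≤ 2 ^ N := by
          calc N.choose (N/16) ≤ ∑ k ∈ Finset.range (N+1), N.choose k :=
              Finset.single_le_sum (f := fun k => N.choose k)
                (fun _ _ => Nat.zero_le _) (by simp; omega)
            _ = 2 ^ N := Nat.sum_range_choose N
        exact Nat.mul_le_mul_right _ hle

lemma choose_le_two_pow' (n k : ℕ) : n.choose k ≤ 2 ^ n := by
  rcases le_or_gt k n with h | h
  · calc n.choose k ≤ ∑ i ∈ Finset.range (n+1), n.choose i :=
        Finset.single_le_sum (f := fun i => n.choose i) (fun _ _ => Nat.zero_le _)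
          (Finset.mem_range.mpr (by omega))
      _ = 2 ^ n := Nat.sum_range_choose n
  · simp [Nat.choose_eq_zero_of_lt h]


/-- Lemma 1 (tedious combinatorial lemma): for `N > e·n` and `Φ < 2^{n/2}`,
the probability over `Φ` independent uniform lists in `[N]^n` that some set
`S ⊆ [N]` of size `N/16` `n/2`-covers more than `(3/n)·N` of the lists is at
most `2^{-N/4}`. -/
theorem cover_lemma (N n Φ : ℕ) (hN : 0 < N) (hn : 0 < n) (hΦ : 0 < Φ)
    (hNn : Real.exp 1 * n < N) (hΦn : (Φ : ℝ) < 2 ^ ((n : ℝ) / 2))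
    (hdvd : 16 ∣ N) :
    (Nat.card {Ls : Fin Φ → Fin n → Fin N //
        ∃ S : Finset (Fin N), S.card = N / 16 ∧
          (3 / (n : ℝ)) * N <
            ((Finset.univ.filter fun φ : Fin Φ =>
              n ≤ 2 * (Finset.univ.filter fun j : Fin n => Ls φ j ∈ S).card).card : ℝ)} : ℝ)
      / (N : ℝ) ^ (n * Φ) ≤ 2 ^ (-(N : ℝ) / 4) := by
  classical
  set t := 3 * N / n + 1 with ht
  set hh := (n+1)/2 with hhh
  set c := n.choose ((n+1)/2) * ((N/16) ^ ((n+1)/2) * N ^ (n - (n+1)/2)) with hc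
  clear_value t hh c
  -- Step 1: bound the Nat.card by the union-bound count
  have key : Nat.card {Ls : Fin Φ → Fin n → Fin N //
        ∃ S : Finset (Fin N), S.card = N / 16 ∧
          (3 / (n : ℝ)) * N <
            ((Finset.univ.filter fun φ : Fin Φ =>
              n ≤ 2 * (Finset.univ.filter fun j : Fin n => Ls φ j ∈ S).card).card : ℝ)}
      ≤ 2 ^ N * (Φ.choose t * (c ^ t * (N ^ n) ^ (Φ - t))) := by
    rw [Nat.card_eq_fintype_card, Fintype.card_subtype, hc]
    refine le_trans (card_le_card ?_) (badCard_le N n Φ t)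
    intro Ls hLs
    rw [mem_filter] at hLs ⊢
    obtain ⟨_, S, hS, hcov⟩ := hLs
    refine ⟨mem_univ _, S, hS, ?_⟩
    set cnt := (univ.filter fun φ : Fin Φ =>
        n ≤ 2 * (univ.filter fun j : Fin n => Ls φ j ∈ S).card).card
    have h1 : ((3 * N / n : ℕ) : ℝ) ≤ 3 / (n : ℝ) * N := by
      calc ((3 * N / n : ℕ) : ℝ) ≤ ((3 * N : ℕ) : ℝ) / (n : ℝ) := Nat.cast_div_le
        _ = 3 / (n : ℝ) * N := by push_cast; ring
    have h2 : (3 * N / n : ℕ) < cnt := by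
      exact_mod_cast lt_of_le_of_lt h1 hcov
    omega
  -- numeric facts
  have hNpos : (0 : ℝ) < N := by exact_mod_cast hN
  have hnt : 3 * N + 1 ≤ n * t := by
    have h1 : n * (3 * N / n) + 3 * N % n = 3 * N := Nat.div_add_mod (3 * N) n
    have h2 : 3 * N % n < n := Nat.mod_lt _ hn
    have h3 : n * t = n * (3 * N / n) + n := by rw [ht, Nat.mul_add, mul_one]
    clear key; omega
  rcases lt_or_ge Φ t with htΦ | htΦ
  · -- t > Φ : the bad set is empty
    rw [Nat.choose_eq_zero_of_lt htΦ] at key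
    simp only [Nat.zero_mul, Nat.mul_zero, Nat.le_zero] at key
    rw [key]
    simp only [Nat.cast_zero, zero_div]
    positivity
  · -- main case
    have hhn : hh ≤ n := by clear key; rw [hhh]; omega
    have h2hh : n ≤ 2 * hh := by clear key; rw [hhh]; omega
    have h16 : ((N / 16 : ℕ) : ℝ) = (N : ℝ) / 16 := by
      rw [Nat.cast_div hdvd (by norm_num)]; norm_num
    -- c ≤ N^n / 2^n in ℝ
    have hc_le : (c : ℝ) ≤ (N : ℝ) ^ n / 2 ^ n := by
      have e1 : (c : ℝ) = (n.choose hh : ℝ) * (((N / 16 : ℕ) : ℝ) ^ hh * (N : ℝ) ^ (n - hh)) := by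
        rw [hc, hhh]; push_cast; ring
      rw [e1, h16]
      have e2 : ((N : ℝ) / 16) ^ hh * (N : ℝ) ^ (n - hh) = (N : ℝ) ^ n / 16 ^ hh := by
        rw [div_pow, div_mul_eq_mul_div, ← pow_add]
        congr 2
        clear key; omega
      rw [e2]
      have hch : (n.choose hh : ℝ) ≤ 2 ^ n := by
        exact_mod_cast choose_le_two_pow' n hh
      calc (n.choose hh : ℝ) * ((N : ℝ) ^ n / 16 ^ hh)
          ≤ 2 ^ n * ((N : ℝ) ^ n / 16 ^ hh) := by
            apply mul_le_mul_of_nonneg_right hch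
            positivity
        _ ≤ (N : ℝ) ^ n / 2 ^ n := by
            rw [mul_div_assoc', div_le_div_iff₀ (by positivity) (by positivity)]
            have h16hh : (2 : ℝ) ^ n * 2 ^ n ≤ 16 ^ hh := by
              have : (16 : ℝ) ^ hh = ((2:ℝ) ^ (4:ℕ)) ^ hh := by norm_num
              rw [this, ← pow_mul]
              calc (2:ℝ) ^ n * 2 ^ n = 2 ^ (n + n) := by rw [pow_add]
                _ ≤ 2 ^ (4 * hh) := by
                    apply pow_le_pow_right₀ (by norm_num)
                    clear key; omega
            nlinarith [pow_nonneg (by norm_num : (0:ℝ) ≤ 2) n,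
              pow_nonneg hNpos.le n, pow_pos (by norm_num : (0:ℝ) < 16) hh]
    -- cast key to ℝ and massage
    have hA : (Nat.card {Ls : Fin Φ → Fin n → Fin N //
        ∃ S : Finset (Fin N), S.card = N / 16 ∧
          (3 / (n : ℝ)) * N <
            ((Finset.univ.filter fun φ : Fin Φ =>
              n ≤ 2 * (Finset.univ.filter fun j : Fin n => Ls φ j ∈ S).card).card : ℝ)} : ℝ)
        ≤ (N : ℝ) ^ (n * Φ) * (2 ^ N * (Φ : ℝ) ^ t / 2 ^ (n * t)) := by
      have hkeyR : (Nat.card {Ls : Fin Φ → Fin n → Fin N //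
        ∃ S : Finset (Fin N), S.card = N / 16 ∧
          (3 / (n : ℝ)) * N <
            ((Finset.univ.filter fun φ : Fin Φ =>
              n ≤ 2 * (Finset.univ.filter fun j : Fin n => Ls φ j ∈ S).card).card : ℝ)} : ℝ)
          ≤ 2 ^ N * ((Φ.choose t : ℝ) * ((c : ℝ) ^ t * ((N : ℝ) ^ n) ^ (Φ - t))) := by
        exact_mod_cast Nat.cast_le.mpr key
      refine hkeyR.trans ?_
      have hchoose : (Φ.choose t : ℝ) ≤ (Φ : ℝ) ^ t := by
        exact_mod_cast Nat.choose_le_pow Φ t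
      have hct : (c : ℝ) ^ t ≤ ((N : ℝ) ^ n / 2 ^ n) ^ t :=
        pow_le_pow_left₀ (by positivity) hc_le t
      calc (2:ℝ) ^ N * ((Φ.choose t : ℝ) * ((c : ℝ) ^ t * ((N : ℝ) ^ n) ^ (Φ - t)))
          ≤ 2 ^ N * ((Φ : ℝ) ^ t * (((N : ℝ) ^ n / 2 ^ n) ^ t * ((N : ℝ) ^ n) ^ (Φ - t))) := by
            apply mul_le_mul_of_nonneg_left _ (by positivity)
            apply mul_le_mul hchoose
              (mul_le_mul_of_nonneg_right hct (by positivity))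
              (by positivity) (by positivity)
        _ = (N : ℝ) ^ (n * Φ) * (2 ^ N * (Φ : ℝ) ^ t / 2 ^ (n * t)) := by
            have e3 : (((N : ℝ) ^ n / 2 ^ n) ^ t * ((N : ℝ) ^ n) ^ (Φ - t))
                = (N : ℝ) ^ (n * Φ) / 2 ^ (n * t) := by
              rw [div_pow, ← pow_mul, ← pow_mul, ← pow_mul,
                div_mul_eq_mul_div, ← pow_add]
              congr 2
              rw [← Nat.mul_add]
              congr 1
              clear key hkeyR; omega
            rw [e3]
            ring
    -- final reduction
    rw [div_le_iff₀ (by positivity)]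
    refine hA.trans ?_
    rw [mul_comm]
    apply mul_le_mul_of_nonneg_right _ (by positivity)
    -- 2^N * Φ^t / 2^(n*t) ≤ 2^(-(N:ℝ)/4)
    have hΦt : (Φ : ℝ) ^ t ≤ ((2:ℝ) ^ ((n : ℝ) / 2)) ^ t :=
      pow_le_pow_left₀ (by positivity) hΦn.le t
    have e4 : ((2:ℝ) ^ ((n : ℝ) / 2)) ^ t = (2:ℝ) ^ ((n : ℝ) / 2 * t) := by
      rw [← Real.rpow_natCast ((2:ℝ) ^ ((n : ℝ) / 2)) t, ← Real.rpow_mul (by norm_num)]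
    have e5 : (2:ℝ) ^ N = (2:ℝ) ^ ((N : ℝ)) := by
      rw [Real.rpow_natCast]
    have e6 : (2:ℝ) ^ (n * t) = (2:ℝ) ^ (((n * t : ℕ) : ℝ)) := by
      rw [Real.rpow_natCast]
    calc (2:ℝ) ^ N * (Φ : ℝ) ^ t / 2 ^ (n * t)
        ≤ (2:ℝ) ^ N * ((2:ℝ) ^ ((n : ℝ) / 2 * t)) / 2 ^ (n * t) := by
          apply div_le_div_of_nonneg_right _ (by positivity)
          exact mul_le_mul_of_nonneg_left (e4 ▸ hΦt) (by positivity)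
      _ = (2:ℝ) ^ ((N : ℝ) + (n : ℝ) / 2 * t - ((n * t : ℕ) : ℝ)) := by
          rw [e5, e6, ← Real.rpow_add (by norm_num), ← Real.rpow_sub (by norm_num)]
      _ ≤ (2:ℝ) ^ (-(N : ℝ) / 4) := by
          apply Real.rpow_le_rpow_of_exponent_le (by norm_num)
          have hntR : (3 * (N:ℝ) + 1) ≤ ((n * t : ℕ) : ℝ) := by exact_mod_cast hnt
          have : ((n * t : ℕ) : ℝ) = (n : ℝ) * t := by push_cast; ring
          rw [this] at hntR
          linarith
end

section
/- Let N, n, Φ be positive integers with N > e·n and Φ < 2^{n/2}, and let α = 1/16, β = 3/n. Then C(N, αN) · (Φ·e/(βN) · (2eα)^{n/2})^{βN} ≤ 2^{-N/4}. -/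
/-- The chain of inequalities at the heart of Lemma 1: with `α = 1/16`,
`β = 3/n`, `N > e·n` and `Φ < 2^{n/2}`,
`C(N, αN) · (Φ·e/(βN) · (2eα)^{n/2})^{βN} ≤ 2^{-N/4}`. -/
theorem cover_chain (N n Φ : ℕ) (hN : 0 < N) (hn : 0 < n) (hΦ : 0 < Φ)
    (hNn : Real.exp 1 * n < N) (hΦn : (Φ : ℝ) < 2 ^ ((n : ℝ) / 2))
    (hdvd : 16 ∣ N) :
    (N.choose (N / 16) : ℝ) *
        ((Φ : ℝ) * Real.exp 1 / ((3 / (n : ℝ)) * N) *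
          (2 * Real.exp 1 * (1 / 16)) ^ ((n : ℝ) / 2)) ^ ((3 / (n : ℝ)) * N)
      ≤ 2 ^ (-(N : ℝ) / 4) := by
  have he1 : (0:ℝ) < Real.exp 1 := Real.exp_pos 1
  have he2 : Real.exp 1 < 2.7182818286 := Real.exp_one_lt_d9
  have hn' : (0:ℝ) < n := by exact_mod_cast hn
  have hN' : (0:ℝ) < N := by exact_mod_cast hN
  obtain ⟨k, rfl⟩ := hdvd
  have hkdiv : (16 * k) / 16 = k := Nat.mul_div_cancel_left k (by norm_num)
  have hNk : ((16 * k : ℕ) : ℝ) = 16 * k := by push_cast; ring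
  -- Step A: choose bound : choose (16k) k ≤ 2^(8k)
  have hA : (((16 * k).choose k) : ℝ) ≤ (2:ℝ) ^ (8 * k) := by
    calc (((16 * k).choose k) : ℝ) ≤ ((16 * k : ℕ) : ℝ) ^ k / (k.factorial : ℝ) :=
          Nat.choose_le_pow_div k (16 * k)
      _ = 16 ^ k * ((k:ℝ) ^ k / (k.factorial : ℝ)) := by push_cast; rw [mul_pow]; ring
      _ ≤ 16 ^ k * Real.exp k := by
          gcongr
          exact Real.pow_div_factorial_le_exp (x := (k:ℝ)) (by positivity) k
      _ = (16 * Real.exp 1) ^ k := by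
          rw [mul_pow, ← Real.exp_nat_mul]; norm_num
      _ ≤ 256 ^ k := by
          apply pow_le_pow_left₀ (by positivity)
          nlinarith
      _ = (2:ℝ) ^ (8 * k) := by rw [pow_mul]; norm_num
  -- Inner base bound
  set X : ℝ := (Φ : ℝ) * Real.exp 1 / ((3 / (n : ℝ)) * (16 * k : ℕ)) *
      (2 * Real.exp 1 * (1 / 16)) ^ ((n : ℝ) / 2) with hXdef
  have hX0 : 0 ≤ X := by
    apply mul_nonneg
    · positivity
    · positivity
  have hbase : 2 * Real.exp 1 * (1 / 16 : ℝ) ≤ (2:ℝ) ^ (-(3:ℝ)/2) := by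
    have h2 : ((2:ℝ) ^ (-(3:ℝ)/2)) ^ (2:ℕ) = (2:ℝ) ^ (-(3:ℝ)) := by
      rw [← Real.rpow_natCast ((2:ℝ) ^ (-(3:ℝ)/2)) 2, ← Real.rpow_mul (by norm_num)]
      norm_num
    have h3 : (2:ℝ) ^ (-(3:ℝ)) = 1/8 := by
      rw [Real.rpow_neg (by norm_num), show ((3:ℝ)) = ((3:ℕ):ℝ) by norm_num,
        Real.rpow_natCast]
      norm_num
    have hpos : (0:ℝ) ≤ (2:ℝ) ^ (-(3:ℝ)/2) := (Real.rpow_pos_of_pos (by norm_num) _).le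
    nlinarith [sq_nonneg (2 * Real.exp 1 * (1/16) - (2:ℝ) ^ (-(3:ℝ)/2))]
  have hXle : X ≤ (2:ℝ) ^ (-(n:ℝ)/4) := by
    have hfrac : (Φ : ℝ) * Real.exp 1 / ((3 / (n : ℝ)) * (16 * k : ℕ)) ≤ (Φ : ℝ) / 3 := by
      rw [div_le_div_iff₀ (by positivity) (by norm_num)]
      have : Real.exp 1 * n ≤ ((16 * k : ℕ) : ℝ) := hNn.le
      calc (Φ : ℝ) * Real.exp 1 * 3 = 3 * Real.exp 1 * (Φ : ℝ) := by ring
        _ ≤ 3 * ((16 * k : ℕ):ℝ) / (n:ℝ) * (Φ : ℝ) := by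
            gcongr
            rw [le_div_iff₀ hn']
            nlinarith
        _ = (Φ : ℝ) * (3 / (n:ℝ) * ((16 * k : ℕ):ℝ)) := by ring
    have hpow : (2 * Real.exp 1 * (1/16 : ℝ)) ^ ((n:ℝ)/2) ≤ (2:ℝ) ^ (-(3:ℝ)/2 * ((n:ℝ)/2)) := by
      calc (2 * Real.exp 1 * (1/16 : ℝ)) ^ ((n:ℝ)/2)
          ≤ ((2:ℝ) ^ (-(3:ℝ)/2)) ^ ((n:ℝ)/2) :=
            Real.rpow_le_rpow (by positivity) hbase (by positivity)
        _ = (2:ℝ) ^ (-(3:ℝ)/2 * ((n:ℝ)/2)) := by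
            rw [← Real.rpow_mul (by norm_num)]
    calc X ≤ (Φ : ℝ) / 3 * (2:ℝ) ^ (-(3:ℝ)/2 * ((n:ℝ)/2)) := by
          rw [hXdef]; exact mul_le_mul hfrac hpow (by positivity) (by positivity)
      _ ≤ (2:ℝ) ^ ((n:ℝ)/2) / 3 * (2:ℝ) ^ (-(3:ℝ)/2 * ((n:ℝ)/2)) := by
          gcongr
      _ = (2:ℝ) ^ ((n:ℝ)/2 + -(3:ℝ)/2 * ((n:ℝ)/2)) / 3 := by
          rw [div_mul_eq_mul_div, ← Real.rpow_add (by norm_num)]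
      _ ≤ (2:ℝ) ^ (-(n:ℝ)/4) := by
          rw [show (n:ℝ)/2 + -(3:ℝ)/2 * ((n:ℝ)/2) = -(n:ℝ)/4 by ring]
          linarith [Real.rpow_pos_of_pos (show (0:ℝ) < 2 by norm_num) (-(n:ℝ)/4)]
  -- raise to βN
  have hβ : (0:ℝ) ≤ (3 / (n:ℝ)) * ((16 * k : ℕ) : ℝ) := by positivity
  have hC : X ^ ((3 / (n:ℝ)) * ((16 * k : ℕ) : ℝ)) ≤ (2:ℝ) ^ (-(3:ℝ) * ((16 * k : ℕ):ℝ) / 4) := by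
    calc X ^ ((3 / (n:ℝ)) * ((16 * k : ℕ) : ℝ))
        ≤ ((2:ℝ) ^ (-(n:ℝ)/4)) ^ ((3 / (n:ℝ)) * ((16 * k : ℕ) : ℝ)) :=
          Real.rpow_le_rpow hX0 hXle hβ
      _ = (2:ℝ) ^ (-(n:ℝ)/4 * ((3 / (n:ℝ)) * ((16 * k : ℕ) : ℝ))) := by
          rw [← Real.rpow_mul (by norm_num)]
      _ = (2:ℝ) ^ (-(3:ℝ) * ((16 * k : ℕ):ℝ) / 4) := by
          congr 1
          field_simp
  -- combine
  rw [hkdiv]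
  have h2pos : (0:ℝ) ≤ (2:ℝ) ^ (8 * k) := by positivity
  calc (((16 * k).choose k) : ℝ) * X ^ ((3 / (n:ℝ)) * ((16 * k : ℕ) : ℝ))
      ≤ (2:ℝ) ^ (8 * k) * (2:ℝ) ^ (-(3:ℝ) * ((16 * k : ℕ):ℝ) / 4) := by
        exact mul_le_mul hA hC (Real.rpow_nonneg hX0 _) h2pos
    _ = (2:ℝ) ^ ((8 * k : ℝ) + -(3:ℝ) * ((16 * k : ℕ):ℝ) / 4) := by
        rw [← Real.rpow_natCast (2:ℝ) (8*k), ← Real.rpow_add (by norm_num)]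
        push_cast; ring_nf
    _ = (2:ℝ) ^ (-((16 * k : ℕ):ℝ) / 4) := by
        congr 1
        rw [hNk]; ring
end
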